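/- arXiv:2312.05726 — 7 statements merged into one kernel-verified Lean document; each statement's English description precedes it below -/
import Mathlib

section
/- Let X be a nonempty set, and for i = 1, …, n let s_i : X → ℂ^ℓ and G_i : X → ℂ^{ℓ×ℓ} be functions such that G_i(x) is Hermitian positive definite for every x ∈ X. Define F(x) = ∑_{i=1}^n s_i(x)^H G_i(x)^{-1} s_i(x) and Q(x, y) = ∑_{i=1}^n [2·Re{s_i(x)^H y_i} − y_i^H G_i(x) y_i] for y = (y_1, …, y_n) ∈ (ℂ^ℓ)^n. Then: (i) for every x ∈ X, sup over y ∈ (ℂ^ℓ)^n of Q(x, y) equals F(x), attained uniquely at y_i = G_i(x)^{-1} s_i(x); (ii) a point x* ∈ X maximizes F over X if and only if the pair (x*, y*) with y_i* = G_i(x*)^{-1} s_i(x*) maximizes Q over X × (ℂ^ℓ)^n. -/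
open Matrix ComplexOrder

/-! Completing the square blockwise,
`2 Re(sᴴ y) - yᴴ G y = sᴴ G⁻¹ s - (y - G⁻¹ s)ᴴ G (y - G⁻¹ s)`,
so `Q(x, y) = F(x)` minus a sum of positive definite quadratic forms in `yᵢ - Gᵢ(x)⁻¹ sᵢ(x)`.
This gives (i), and (ii) holds for any `Q ≤ F` attaining `F` on a section `x ↦ (x, y⋆(x))`. -/

namespace Matrix

variable {𝕜 m ι : Type*} [RCLike 𝕜] [Fintype m]

open RCLike

lemma PosSemidef.re_dotProduct_mulVec_nonneg {G : Matrix m m 𝕜} (hG : G.PosSemidef)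
    (d : m → 𝕜) : 0 ≤ re (star d ⬝ᵥ G *ᵥ d) :=
  (RCLike.nonneg_iff.mp (hG.dotProduct_mulVec_nonneg d)).1

lemma PosDef.re_dotProduct_mulVec_eq_zero_iff {G : Matrix m m 𝕜} (hG : G.PosDef)
    {d : m → 𝕜} : re (star d ⬝ᵥ G *ᵥ d) = 0 ↔ d = 0 := by
  refine ⟨fun h => ?_, fun h => by simp [h]⟩
  by_contra hd
  exact (RCLike.pos_iff.mp (hG.dotProduct_mulVec_pos hd)).1.ne' h

variable [DecidableEq m]

lemma IsHermitian.two_mul_re_dotProduct_sub_re_dotProduct_mulVec {G : Matrix m m 𝕜}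
    (hG : G.IsHermitian) (hdet : IsUnit G.det) (s y : m → 𝕜) :
    2 * re (star s ⬝ᵥ y) - re (star y ⬝ᵥ G *ᵥ y) =
      re (star s ⬝ᵥ G⁻¹ *ᵥ s) - re (star (y - G⁻¹ *ᵥ s) ⬝ᵥ G *ᵥ (y - G⁻¹ *ᵥ s)) := by
  have hstar : star (G⁻¹ *ᵥ s) ᵥ* G = star s := by
    rw [star_mulVec, hG.inv.eq, vecMul_vecMul, nonsing_inv_mul G hdet, vecMul_one]
  have hcancel : star y ⬝ᵥ G *ᵥ (G⁻¹ *ᵥ s) = star y ⬝ᵥ s := by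
    rw [mulVec_mulVec, mul_nonsing_inv G hdet, one_mulVec]
  have hconj : re (star y ⬝ᵥ s) = re (star s ⬝ᵥ y) := by
    rw [← star_star (star y ⬝ᵥ s), star_dotProduct, star_star, star_def, conj_re]
  have hcross : star (G⁻¹ *ᵥ s) ⬝ᵥ G *ᵥ y = star s ⬝ᵥ y := by rw [dotProduct_mulVec, hstar]
  have hmin : star (G⁻¹ *ᵥ s) ⬝ᵥ G *ᵥ (G⁻¹ *ᵥ s) = star s ⬝ᵥ G⁻¹ *ᵥ s := by
    rw [dotProduct_mulVec, hstar]
  simp only [star_sub, mulVec_sub, sub_dotProduct, dotProduct_sub, hcross, hmin, hcancel,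
    map_sub, hconj]
  ring

variable [Fintype ι]

lemma PosDef.sum_quadratic_transform_eq {G : ι → Matrix m m 𝕜} (hG : ∀ i, (G i).PosDef)
    (s y : ι → m → 𝕜) :
    ∑ i, (2 * re (star (s i) ⬝ᵥ y i) - re (star (y i) ⬝ᵥ G i *ᵥ y i)) =
      ∑ i, re (star (s i) ⬝ᵥ (G i)⁻¹ *ᵥ s i) -
        ∑ i, re (star (y i - (G i)⁻¹ *ᵥ s i) ⬝ᵥ G i *ᵥ (y i - (G i)⁻¹ *ᵥ s i)) := by
  rw [← Finset.sum_sub_distrib]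
  refine Finset.sum_congr rfl fun i _ => ?_
  exact (hG i).isHermitian.two_mul_re_dotProduct_sub_re_dotProduct_mulVec
    ((isUnit_iff_isUnit_det _).mp (hG i).isUnit) _ _

lemma PosDef.sum_quadratic_transform_le {G : ι → Matrix m m 𝕜} (hG : ∀ i, (G i).PosDef)
    (s y : ι → m → 𝕜) :
    ∑ i, (2 * re (star (s i) ⬝ᵥ y i) - re (star (y i) ⬝ᵥ G i *ᵥ y i)) ≤
      ∑ i, re (star (s i) ⬝ᵥ (G i)⁻¹ *ᵥ s i) := by
  rw [PosDef.sum_quadratic_transform_eq hG, sub_le_self_iff]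
  exact Finset.sum_nonneg fun i _ => (hG i).posSemidef.re_dotProduct_mulVec_nonneg _

lemma PosDef.sum_quadratic_transform_eq_iff {G : ι → Matrix m m 𝕜} (hG : ∀ i, (G i).PosDef)
    (s y : ι → m → 𝕜) :
    ∑ i, (2 * re (star (s i) ⬝ᵥ y i) - re (star (y i) ⬝ᵥ G i *ᵥ y i)) =
        ∑ i, re (star (s i) ⬝ᵥ (G i)⁻¹ *ᵥ s i) ↔
      y = fun i => (G i)⁻¹ *ᵥ s i := by
  rw [PosDef.sum_quadratic_transform_eq hG, sub_eq_self, Finset.sum_eq_zero_iff_of_nonneg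
    fun i _ => (hG i).posSemidef.re_dotProduct_mulVec_nonneg _, funext_iff]
  simp only [Finset.mem_univ, true_imp_iff, (hG _).re_dotProduct_mulVec_eq_zero_iff, sub_eq_zero]

end Matrix

theorem forall_le_iff_forall_forall_le_of_le_of_eq {X Y β : Type*} [Preorder β]
    {F : X → β} {Q : X → Y → β} {y : X → Y} (hle : ∀ x z, Q x z ≤ F x)
    (heq : ∀ x, Q x (y x) = F x) (x₀ : X) :
    (∀ x, F x ≤ F x₀) ↔ ∀ x z, Q x z ≤ Q x₀ (y x₀) := by
  refine ⟨fun h x z => ?_, fun h x => ?_⟩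
  · exact (hle x z).trans ((h x).trans (heq x₀).ge)
  · exact (heq x).ge.trans ((h x (y x)).trans (heq x₀).le)

theorem quadratic_transform_equivalence_general {ℓ n : ℕ} (X : Type*)
    (s : Fin n → X → Fin ℓ → ℂ) (G : Fin n → X → Matrix (Fin ℓ) (Fin ℓ) ℂ)
    (hG : ∀ i x, (G i x).PosDef)
    (F : X → ℝ)
    (hF : ∀ x, F x = ∑ i, (star (s i x) ⬝ᵥ (G i x)⁻¹ *ᵥ s i x).re)
    (Q : X → (Fin n → Fin ℓ → ℂ) → ℝ)
    (hQ : ∀ x y, Q x y =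
      ∑ i, (2 * (star (s i x) ⬝ᵥ y i).re - (star (y i) ⬝ᵥ (G i x) *ᵥ y i).re))
    (Ystar : X → Fin n → Fin ℓ → ℂ)
    (hY : ∀ x i, Ystar x i = (G i x)⁻¹ *ᵥ s i x) :
    (∀ x, (∀ y, Q x y ≤ F x) ∧ Q x (Ystar x) = F x ∧
      ∀ y, Q x y = F x → y = Ystar x) ∧
    (∀ xstar : X, (∀ x, F x ≤ F xstar) ↔
      (∀ x y, Q x y ≤ Q xstar (Ystar xstar))) := by
  have hYstar : Ystar = fun x i => (G i x)⁻¹ *ᵥ s i x := funext fun x => funext (hY x)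
  have hle : ∀ x y, Q x y ≤ F x := fun x y => by
    rw [hQ, hF]
    exact PosDef.sum_quadratic_transform_le (hG · x) (s · x) y
  have heq_iff : ∀ x y, Q x y = F x ↔ y = Ystar x := fun x y => by
    rw [hQ, hF, hYstar]
    exact PosDef.sum_quadratic_transform_eq_iff (hG · x) (s · x) y
  have heq : ∀ x, Q x (Ystar x) = F x := fun x => (heq_iff x _).mpr rfl
  exact ⟨fun x => ⟨hle x, heq x, fun y => (heq_iff x y).mp⟩,
    forall_le_iff_forall_forall_le_of_le_of_eq hle heq⟩

/-- **Quadratic transform equivalence** (Proposition 1).  For `sᵢ : X → ℂ^ℓ`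
and Hermitian positive definite `Gᵢ(x)`, with
`F(x) = ∑ᵢ sᵢ(x)ᴴ Gᵢ(x)⁻¹ sᵢ(x)` and
`Q(x, y) = ∑ᵢ [2 Re{sᵢ(x)ᴴ yᵢ} − yᵢᴴ Gᵢ(x) yᵢ]`:
(i) for each `x`, `Q(x, ·)` is maximized over `y` with value `F(x)`,
uniquely at `yᵢ = Gᵢ(x)⁻¹ sᵢ(x)`; (ii) `x⋆` maximizes `F` over `X` iff
`(x⋆, y⋆)` maximizes `Q` over `X × (ℂ^ℓ)ⁿ`. -/
theorem quadratic_transform_equivalence {ℓ n : ℕ} (X : Type*) [Nonempty X]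
    (s : Fin n → X → Fin ℓ → ℂ) (G : Fin n → X → Matrix (Fin ℓ) (Fin ℓ) ℂ)
    (hG : ∀ i x, (G i x).PosDef)
    (F : X → ℝ)
    (hF : ∀ x, F x = ∑ i, (star (s i x) ⬝ᵥ (G i x)⁻¹ *ᵥ s i x).re)
    (Q : X → (Fin n → Fin ℓ → ℂ) → ℝ)
    (hQ : ∀ x y, Q x y =
      ∑ i, (2 * (star (s i x) ⬝ᵥ y i).re - (star (y i) ⬝ᵥ (G i x) *ᵥ y i).re))
    (Ystar : X → Fin n → Fin ℓ → ℂ)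
    (hY : ∀ x i, Ystar x i = (G i x)⁻¹ *ᵥ s i x) :
    (∀ x, (∀ y, Q x y ≤ F x) ∧ Q x (Ystar x) = F x ∧
      ∀ y, Q x y = F x → y = Ystar x) ∧
    (∀ xstar : X, (∀ x, F x ≤ F xstar) ↔
      (∀ x y, Q x y ≤ Q xstar (Ystar xstar))) :=
  quadratic_transform_equivalence_general X s G hG F hF Q hQ Ystar hY
end

section
/- With the sum-of-weighted-ratios setup, fix x = (x_1, …, x_n) such that every G_i(x) is positive definite. Then for every y = (y_1, …, y_n) ∈ (ℂ^ℓ)^n, f_q(x, y) ≤ f_o(x), and equality holds if and only if y_i = Y_i(x) := G_i(x)^{-1} A_i x_i for all i = 1, …, n. -/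
open Matrix ComplexOrder

/-- `Gᵢ(x) = ∑ⱼ Bᵢⱼ xⱼ xⱼᴴ Bᵢⱼᴴ`. -/
noncomputable def Gmat {n d ℓ : ℕ}
    (B : Fin n → Fin n → Matrix (Fin ℓ) (Fin d) ℂ)
    (x : Fin n → Fin d → ℂ) (i : Fin n) : Matrix (Fin ℓ) (Fin ℓ) ℂ :=
  ∑ j, B i j * vecMulVec (x j) (star (x j)) * (B i j)ᴴ

/-- The ratio `Mᵢ(x) = (Aᵢ xᵢ)ᴴ Gᵢ(x)⁻¹ (Aᵢ xᵢ)` (a real number). -/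
noncomputable def Mratio {n d ℓ : ℕ}
    (A : Fin n → Matrix (Fin ℓ) (Fin d) ℂ)
    (B : Fin n → Fin n → Matrix (Fin ℓ) (Fin d) ℂ)
    (x : Fin n → Fin d → ℂ) (i : Fin n) : ℝ :=
  (star (A i *ᵥ x i) ⬝ᵥ (Gmat B x i)⁻¹ *ᵥ (A i *ᵥ x i)).re

/-- Sum-of-weighted-ratios objective `f_o(x) = ∑ᵢ ωᵢ Mᵢ(x)`. -/
noncomputable def fo {n d ℓ : ℕ} (ω : Fin n → ℝ)
    (A : Fin n → Matrix (Fin ℓ) (Fin d) ℂ)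
    (B : Fin n → Fin n → Matrix (Fin ℓ) (Fin d) ℂ)
    (x : Fin n → Fin d → ℂ) : ℝ :=
  ∑ i, ω i * Mratio A B x i

/-- Quadratic-transform surrogate
`f_q(x, y) = ∑ᵢ ωᵢ [2 Re{xᵢᴴ Aᵢᴴ yᵢ} − ∑ⱼ yᵢᴴ Bᵢⱼ xⱼ xⱼᴴ Bᵢⱼᴴ yᵢ]`. -/
noncomputable def fq {n d ℓ : ℕ} (ω : Fin n → ℝ)
    (A : Fin n → Matrix (Fin ℓ) (Fin d) ℂ)
    (B : Fin n → Fin n → Matrix (Fin ℓ) (Fin d) ℂ)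
    (x : Fin n → Fin d → ℂ) (y : Fin n → Fin ℓ → ℂ) : ℝ :=
  ∑ i, ω i * (2 * (star (A i *ᵥ x i) ⬝ᵥ y i).re
    - ∑ j, (star (y i) ⬝ᵥ (B i j * vecMulVec (x j) (star (x j)) * (B i j)ᴴ) *ᵥ y i).re)

/-! Completing the square: for Hermitian invertible `G` and `c = G⁻¹ a`,
`aᴴ G⁻¹ a - (2 Re(aᴴ y) - yᴴ G y) = (y - c)ᴴ G (y - c)`, which for positive definite `G` is
nonnegative and vanishes exactly at `y = c`. Applied with `G = Gᵢ(x)`, `a = Aᵢ xᵢ`, this compares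
`f_q(x, y)` and `f_o(x)` term by term, and the weights `ωᵢ > 0` preserve both the inequality and
its equality case. -/

namespace Matrix

variable {m 𝕜 : Type*} [Fintype m] [DecidableEq m] [RCLike 𝕜] {G : Matrix m m 𝕜}

lemma IsHermitian.re_dotProduct_inv_mulVec_sub_eq (hG : G.IsHermitian) (hGu : IsUnit G)
    (a y : m → 𝕜) :
    RCLike.re (star a ⬝ᵥ G⁻¹ *ᵥ a)
        - (2 * RCLike.re (star a ⬝ᵥ y) - RCLike.re (star y ⬝ᵥ G *ᵥ y))
      = RCLike.re (star (y - G⁻¹ *ᵥ a) ⬝ᵥ G *ᵥ (y - G⁻¹ *ᵥ a)) := by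
  set c := G⁻¹ *ᵥ a
  have hGc : G *ᵥ c = a := by
    rw [mulVec_mulVec, G.mul_nonsing_inv ((isUnit_iff_isUnit_det G).mp hGu), one_mulVec]
  have hcG : ∀ v, star c ⬝ᵥ G *ᵥ v = star a ⬝ᵥ v := fun v => by
    rw [dotProduct_mulVec, ← hG.eq, ← star_mulVec, hGc]
  have hyc : RCLike.re (star y ⬝ᵥ G *ᵥ c) = RCLike.re (star a ⬝ᵥ y) := by
    rw [hGc, ← RCLike.conj_re, ← RCLike.star_def, star_dotProduct, star_star]
  rw [star_sub, mulVec_sub, sub_dotProduct, dotProduct_sub, dotProduct_sub, hcG, hcG,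
    map_sub, map_sub, map_sub, hyc]
  ring

lemma PosDef.two_re_dotProduct_sub_le (hG : G.PosDef) (a y : m → 𝕜) :
    2 * RCLike.re (star a ⬝ᵥ y) - RCLike.re (star y ⬝ᵥ G *ᵥ y)
      ≤ RCLike.re (star a ⬝ᵥ G⁻¹ *ᵥ a) := by
  have := hG.isHermitian.re_dotProduct_inv_mulVec_sub_eq hG.isUnit a y
  linarith [hG.posSemidef.re_dotProduct_nonneg (y - G⁻¹ *ᵥ a)]

lemma PosDef.two_re_dotProduct_sub_eq_iff (hG : G.PosDef) (a y : m → 𝕜) :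
    2 * RCLike.re (star a ⬝ᵥ y) - RCLike.re (star y ⬝ᵥ G *ᵥ y)
      = RCLike.re (star a ⬝ᵥ G⁻¹ *ᵥ a) ↔ y = G⁻¹ *ᵥ a := by
  have := hG.isHermitian.re_dotProduct_inv_mulVec_sub_eq hG.isUnit a y
  constructor
  · intro h
    by_contra hne
    linarith [hG.re_dotProduct_pos (sub_ne_zero.mpr hne)]
  · rintro rfl
    rw [sub_self, mulVec_zero, dotProduct_zero, map_zero] at this
    linarith

end Matrix

lemma fq_eq_sum_Gmat {n d ℓ : ℕ} (ω : Fin n → ℝ)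
    (A : Fin n → Matrix (Fin ℓ) (Fin d) ℂ)
    (B : Fin n → Fin n → Matrix (Fin ℓ) (Fin d) ℂ)
    (x : Fin n → Fin d → ℂ) (y : Fin n → Fin ℓ → ℂ) :
    fq ω A B x y = ∑ i, ω i * (2 * (star (A i *ᵥ x i) ⬝ᵥ y i).re
      - (star (y i) ⬝ᵥ Gmat B x i *ᵥ y i).re) := by
  simp only [fq, Gmat, sum_mulVec, dotProduct_sum, Complex.re_sum]

/-- For fixed `x` with every `Gᵢ(x)` positive definite, `f_q(x, y) ≤ f_o(x)`
for all `y`, with equality iff `yᵢ = Gᵢ(x)⁻¹ Aᵢ xᵢ` for all `i`. -/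
theorem fq_le_fo_iff {n d ℓ : ℕ} (ω : Fin n → ℝ) (hω : ∀ i, 0 < ω i)
    (A : Fin n → Matrix (Fin ℓ) (Fin d) ℂ)
    (B : Fin n → Fin n → Matrix (Fin ℓ) (Fin d) ℂ)
    (x : Fin n → Fin d → ℂ) (hG : ∀ i, (Gmat B x i).PosDef) :
    ∀ y : Fin n → Fin ℓ → ℂ,
      fq ω A B x y ≤ fo ω A B x ∧
      (fq ω A B x y = fo ω A B x ↔
        ∀ i, y i = (Gmat B x i)⁻¹ *ᵥ (A i *ᵥ x i)) := by
  intro y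
  have hle : ∀ i ∈ Finset.univ,
      ω i * (2 * (star (A i *ᵥ x i) ⬝ᵥ y i).re - (star (y i) ⬝ᵥ Gmat B x i *ᵥ y i).re)
        ≤ ω i * Mratio A B x i :=
    fun i _ => mul_le_mul_of_nonneg_left
      ((hG i).two_re_dotProduct_sub_le (A i *ᵥ x i) (y i)) (hω i).le
  rw [fq_eq_sum_Gmat, fo]
  refine ⟨Finset.sum_le_sum hle, ?_⟩
  rw [Finset.sum_eq_sum_iff_of_le hle]
  refine forall_congr' fun i => ?_
  rw [Mratio, mul_right_inj' (hω i).ne', ← (hG i).two_re_dotProduct_sub_eq_iff]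
  simp only [Finset.mem_univ, true_implies, RCLike.re_to_complex]
end

section
/- With the sum-of-weighted-ratios setup, fix y = (y_1, …, y_n) ∈ (ℂ^ℓ)^n, let D_i(y) = ∑_{j=1}^n ω_j B_{ji}^H y_j y_j^H B_{ji}, and choose real numbers λ_i ≥ λ_max(D_i(y)) (the largest eigenvalue of the Hermitian positive semidefinite matrix D_i(y)). Then for all x = (x_1, …, x_n) and z = (z_1, …, z_n) in (ℂ^d)^n, f_t(x, y, z) ≤ f_q(x, y), and equality holds when z_i = x_i for all i. -/
open Matrix ComplexOrder

/-- `Dᵢ(y) = ∑ⱼ ωⱼ Bⱼᵢᴴ yⱼ yⱼᴴ Bⱼᵢ`. -/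
noncomputable def Dmat {n d ℓ : ℕ} (ω : Fin n → ℝ)
    (B : Fin n → Fin n → Matrix (Fin ℓ) (Fin d) ℂ)
    (y : Fin n → Fin ℓ → ℂ) (i : Fin n) : Matrix (Fin d) (Fin d) ℂ :=
  ∑ j, (ω j : ℂ) • ((B j i)ᴴ * vecMulVec (y j) (star (y j)) * B j i)

/-- Nonhomogeneous surrogate
`f_t(x, y, z) = ∑ᵢ [2 Re{ωᵢ xᵢᴴ Aᵢᴴ yᵢ + xᵢᴴ(λᵢ I − Dᵢ(y)) zᵢ}`
`+ zᵢᴴ(Dᵢ(y) − λᵢ I) zᵢ − λᵢ xᵢᴴ xᵢ]`. -/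
noncomputable def ft {n d ℓ : ℕ} (ω : Fin n → ℝ) (lam : Fin n → ℝ)
    (A : Fin n → Matrix (Fin ℓ) (Fin d) ℂ)
    (B : Fin n → Fin n → Matrix (Fin ℓ) (Fin d) ℂ)
    (x : Fin n → Fin d → ℂ) (y : Fin n → Fin ℓ → ℂ)
    (z : Fin n → Fin d → ℂ) : ℝ :=
  ∑ i, (2 * ((ω i : ℂ) * (star (A i *ᵥ x i) ⬝ᵥ y i)
        + star (x i) ⬝ᵥ ((lam i : ℂ) • (1 : Matrix (Fin d) (Fin d) ℂ)
            - Dmat ω B y i) *ᵥ z i).re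
    + (star (z i) ⬝ᵥ (Dmat ω B y i
        - (lam i : ℂ) • (1 : Matrix (Fin d) (Fin d) ℂ)) *ᵥ z i).re
    - lam i * (star (x i) ⬝ᵥ x i).re)

/-!
With `Mᵢ = λᵢ I - Dᵢ(y)`, exchanging the order of summation turns the interference term of `f_q`
into `∑ᵢ xᵢᴴ Dᵢ(y) xᵢ`, after which completing the square gives
`f_q(x, y) - f_t(x, y, z) = ∑ᵢ (xᵢ - zᵢ)ᴴ Mᵢ (xᵢ - zᵢ)`.
Since `λᵢ` dominates the spectrum of `Dᵢ(y)`, every `Mᵢ` is positive semidefinite, so the gap is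
nonnegative and vanishes at `z = x`.
-/

namespace Matrix

variable {l m k R : Type*} [Fintype l] [Fintype m] [Fintype k]

theorem dotProduct_mul_vecMulVec_mul_mulVec [CommSemiring R] (u : l → R) (M : Matrix l m R)
    (v w : m → R) (N : Matrix m k R) (u' : k → R) :
    u ⬝ᵥ (M * vecMulVec v w * N) *ᵥ u' = (u ⬝ᵥ M *ᵥ v) * (w ⬝ᵥ N *ᵥ u') := by
  rw [mul_vecMulVec, vecMulVec_mul, vecMulVec_mulVec, dotProduct_smul, ← dotProduct_mulVec]
  simp

theorem star_star_dotProduct_mulVec [CommSemiring R] [StarRing R] (u : l → R) (M : Matrix l m R)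
    (v : m → R) : star (star u ⬝ᵥ M *ᵥ v) = star v ⬝ᵥ Mᴴ *ᵥ u := by
  rw [← star_dotProduct, dotProduct_mulVec, star_mulVec]

theorem IsHermitian.re_star_sub_dotProduct_mulVec_sub {M : Matrix m m ℂ} (hM : M.IsHermitian)
    (a b : m → ℂ) :
    (star (a - b) ⬝ᵥ M *ᵥ (a - b)).re
      = (star a ⬝ᵥ M *ᵥ a).re - 2 * (star a ⬝ᵥ M *ᵥ b).re + (star b ⬝ᵥ M *ᵥ b).re := by
  have hsymm : (star b ⬝ᵥ M *ᵥ a).re = (star a ⬝ᵥ M *ᵥ b).re := by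
    conv_lhs => rw [← hM.eq, ← star_star_dotProduct_mulVec]
    exact Complex.conj_re _
  simp only [star_sub, mulVec_sub, sub_dotProduct, dotProduct_sub, Complex.sub_re, hsymm]
  ring

open scoped MatrixOrder in
theorem IsHermitian.posSemidef_smul_one_sub {𝕜 : Type*} [DecidableEq m] [RCLike 𝕜]
    {A : Matrix m m 𝕜} (hA : A.IsHermitian) {c : ℝ} (hc : ∀ i, hA.eigenvalues i ≤ c) :
    ((c : 𝕜) • 1 - A).PosSemidef := by
  have hle : A ≤ algebraMap ℝ (Matrix m m 𝕜) c := by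
    refine le_algebraMap_of_spectrum_le ?_ hA
    rw [hA.spectrum_real_eq_range_eigenvalues]
    rintro _ ⟨i, rfl⟩
    exact hc i
  rwa [le_iff, Algebra.algebraMap_eq_smul_one, RCLike.real_smul_eq_coe_smul (K := 𝕜)] at hle

end Matrix

section

variable {n d ℓ : ℕ} (ω : Fin n → ℝ) (A : Fin n → Matrix (Fin ℓ) (Fin d) ℂ)
  (B : Fin n → Fin n → Matrix (Fin ℓ) (Fin d) ℂ) (y : Fin n → Fin ℓ → ℂ)

theorem sum_re_star_dotProduct_Dmat_mulVec (x : Fin n → Fin d → ℂ) :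
    ∑ i, (star (x i) ⬝ᵥ Dmat ω B y i *ᵥ x i).re
      = ∑ i, ω i * ∑ j,
          (star (y i) ⬝ᵥ (B i j * vecMulVec (x j) (star (x j)) * (B i j)ᴴ) *ᵥ y i).re := by
  have hfq : ∀ i j, (star (y i) ⬝ᵥ (B i j * vecMulVec (x j) (star (x j)) * (B i j)ᴴ) *ᵥ y i).re
      = Complex.normSq (star (y i) ⬝ᵥ B i j *ᵥ x j) := by
    intro i j
    rw [dotProduct_mul_vecMulVec_mul_mulVec, ← star_star_dotProduct_mulVec, Complex.star_def,
      Complex.mul_conj, Complex.ofReal_re]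
  have hD : ∀ i, (star (x i) ⬝ᵥ Dmat ω B y i *ᵥ x i).re
      = ∑ j, ω j * Complex.normSq (star (y j) ⬝ᵥ B j i *ᵥ x i) := by
    intro i
    simp only [Dmat, sum_mulVec, dotProduct_sum, Complex.re_sum, smul_mulVec, dotProduct_smul,
      smul_eq_mul, Complex.re_ofReal_mul]
    congr! 2 with j
    rw [dotProduct_mul_vecMulVec_mul_mulVec, ← star_star_dotProduct_mulVec, Complex.star_def,
      mul_comm, Complex.mul_conj, Complex.ofReal_re]
  simp_rw [hfq, hD, Finset.mul_sum]
  exact Finset.sum_comm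

theorem fq_eq_sub_sum_Dmat (x : Fin n → Fin d → ℂ) :
    fq ω A B x y = ∑ i, ω i * (2 * (star (A i *ᵥ x i) ⬝ᵥ y i).re)
      - ∑ i, (star (x i) ⬝ᵥ Dmat ω B y i *ᵥ x i).re := by
  simp_rw [fq, sum_re_star_dotProduct_Dmat_mulVec, ← Finset.sum_sub_distrib, mul_sub]

theorem fq_sub_ft (lam : Fin n → ℝ) (hD : ∀ i, (Dmat ω B y i).IsHermitian)
    (x z : Fin n → Fin d → ℂ) :
    fq ω A B x y - ft ω lam A B x y z
      = ∑ i, (star (x i - z i) ⬝ᵥ ((lam i : ℂ) • 1 - Dmat ω B y i) *ᵥ (x i - z i)).re := by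
  rw [fq_eq_sub_sum_Dmat, ft, sub_sub, ← Finset.sum_add_distrib,
    ← Finset.sum_sub_distrib]
  refine Finset.sum_congr rfl fun i _ => ?_
  set M : Matrix (Fin d) (Fin d) ℂ := (lam i : ℂ) • 1 - Dmat ω B y i
  have hM : M.IsHermitian := (isHermitian_one.smul (Complex.conj_ofReal _)).sub (hD i)
  have hMa : (star (x i) ⬝ᵥ M *ᵥ x i).re
      = lam i * (star (x i) ⬝ᵥ x i).re - (star (x i) ⬝ᵥ Dmat ω B y i *ᵥ x i).re := by
    simp only [M, sub_mulVec, smul_mulVec, one_mulVec, dotProduct_sub, dotProduct_smul,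
      smul_eq_mul, Complex.sub_re, Complex.re_ofReal_mul]
  have hDz : Dmat ω B y i - (lam i : ℂ) • 1 = -M := (neg_sub _ _).symm
  rw [hM.re_star_sub_dotProduct_mulVec_sub, hDz, neg_mulVec, dotProduct_neg, Complex.neg_re,
    Complex.add_re, Complex.re_ofReal_mul]
  linarith
end

theorem ft_le_fq_general {n d ℓ : ℕ} (ω : Fin n → ℝ)
    (A : Fin n → Matrix (Fin ℓ) (Fin d) ℂ)
    (B : Fin n → Fin n → Matrix (Fin ℓ) (Fin d) ℂ)
    (y : Fin n → Fin ℓ → ℂ) (lam : Fin n → ℝ)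
    (hHerm : ∀ i, (Dmat ω B y i).IsHermitian)
    (hlam : ∀ i j, (hHerm i).eigenvalues j ≤ lam i) :
    (∀ (x z : Fin n → Fin d → ℂ), ft ω lam A B x y z ≤ fq ω A B x y) ∧
    (∀ x : Fin n → Fin d → ℂ, ft ω lam A B x y x = fq ω A B x y) := by
  have hgap := fq_sub_ft ω A B y lam hHerm
  refine ⟨fun x z => sub_nonneg.mp ?_, fun x => (sub_eq_zero.mp ?_).symm⟩
  · rw [hgap]
    exact Finset.sum_nonneg fun i _ =>
      ((hHerm i).posSemidef_smul_one_sub (hlam i)).re_dotProduct_nonneg _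
  · simp [hgap]

/-- For fixed `y` and `λᵢ ≥ λ_max(Dᵢ(y))`, the nonhomogeneous surrogate
satisfies `f_t(x, y, z) ≤ f_q(x, y)` for all `x, z`, with equality when
`zᵢ = xᵢ` for all `i`. -/
theorem ft_le_fq {n d ℓ : ℕ} (ω : Fin n → ℝ) (hω : ∀ i, 0 < ω i)
    (A : Fin n → Matrix (Fin ℓ) (Fin d) ℂ)
    (B : Fin n → Fin n → Matrix (Fin ℓ) (Fin d) ℂ)
    (y : Fin n → Fin ℓ → ℂ) (lam : Fin n → ℝ)
    (hHerm : ∀ i, (Dmat ω B y i).IsHermitian)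
    (hlam : ∀ i j, (hHerm i).eigenvalues j ≤ lam i) :
    (∀ (x z : Fin n → Fin d → ℂ), ft ω lam A B x y z ≤ fq ω A B x y) ∧
    (∀ x : Fin n → Fin d → ℂ, ft ω lam A B x y x = fq ω A B x y) :=
  ft_le_fq_general ω A B y lam hHerm hlam
end

section
/- With the ratio setup, fix x = (x_1, …, x_n) ∈ (ℂ^d)^n such that G_i(x) is positive definite, and set y_i = Y_i(x) = G_i(x)^{-1} A_i x_i. Then the real-valued function M_i : (ℂ^d)^n → ℝ is differentiable over ℝ at x, and its ℝ-Fréchet derivative in an arbitrary direction h = (h_1, …, h_n) ∈ (ℂ^d)^n is given by D M_i(x)[h] = 2·Re{(A_i^H y_i − B_{ii}^H y_i y_i^H B_{ii} x_i)^H h_i} − 2·∑_{j ≠ i} Re{(B_{ij}^H y_i y_i^H B_{ij} x_j)^H h_j}. (Equivalently, in conjugate-coordinate notation, ∂M_i/∂x_i^c = 2 A_i^H y_i − 2 B_{ii}^H y_i y_i^H B_{ii} x_i and ∂M_i/∂x_j^c = −2 B_{ij}^H y_i y_i^H B_{ij} x_j for j ≠ i.) -/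
/-!
Write `v(x) = Aᵢ xᵢ` (real-linear) and `G(x) = Gᵢ(x) = ∑ⱼ uⱼ uⱼᴴ` with `uⱼ = Bᵢⱼ xⱼ`, so that
`Mᵢ = Re (vᴴ G⁻¹ v)`. The product rule together with `D(G⁻¹) = -G⁻¹ (DG) G⁻¹` gives
`DMᵢ[h] = 2 Re (yᴴ Dv[h]) - Re (yᴴ DG[h] y)`, where `G` being Hermitian turns `vᴴ G⁻¹` into `yᴴ`.
The summand `uⱼ uⱼᴴ` has derivative `(Bᵢⱼ hⱼ) uⱼᴴ + uⱼ (Bᵢⱼ hⱼ)ᴴ`, and sandwiching it between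
`yᴴ` and `y` gives `2 Re (conj (yᴴ Bᵢⱼ xⱼ) (yᴴ Bᵢⱼ hⱼ)) = 2 Re ((Bᵢⱼᴴ y yᴴ Bᵢⱼ xⱼ)ᴴ hⱼ)`.
-/

open Matrix ComplexOrder

open ContinuousLinearMap

theorem LinearMap.exists_hasFDerivAt_bilinear {𝕜 E F₁ F₂ F₃ : Type*}
    [NontriviallyNormedField 𝕜] [CompleteSpace 𝕜]
    [NormedAddCommGroup E] [NormedSpace 𝕜 E]
    [NormedAddCommGroup F₁] [NormedSpace 𝕜 F₁] [FiniteDimensional 𝕜 F₁]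
    [NormedAddCommGroup F₂] [NormedSpace 𝕜 F₂] [FiniteDimensional 𝕜 F₂]
    [NormedAddCommGroup F₃] [NormedSpace 𝕜 F₃]
    (b : F₁ →ₗ[𝕜] F₂ →ₗ[𝕜] F₃) {u : E → F₁} {w : E → F₂} {u' : E →L[𝕜] F₁}
    {w' : E →L[𝕜] F₂} {x : E} (hu : HasFDerivAt u u' x) (hw : HasFDerivAt w w' x) :
    ∃ L : E →L[𝕜] F₃, HasFDerivAt (fun y => b (u y) (w y)) L x ∧
      ∀ h, L h = b (u' h) (w x) + b (u x) (w' h) :=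
  ⟨_, b.toContinuousBilinearMap.hasFDerivAt_of_bilinear hu hw, fun _ => add_comm _ _⟩

/- `HasFDerivAt` only sees the topology of `Matrix m m 𝕜`, so matrix-valued derivatives are
stated without a norm; inside proofs, any of Mathlib's matrix norms (all inducing the product
topology) is installed locally to apply the normed-space calculus lemmas. -/
section MatrixCalculus

variable {𝕜 m E : Type*} [RCLike 𝕜] [Fintype m] [NormedAddCommGroup E] [NormedSpace ℝ E]
  {x : E}

theorem exists_hasFDerivAt_vecMulVec_star_self {u : E → m → 𝕜} {u' : E →L[ℝ] m → 𝕜}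
    (hu : HasFDerivAt u u' x) :
    ∃ L : E →L[ℝ] Matrix m m 𝕜, HasFDerivAt (fun y => vecMulVec (u y) (star (u y))) L x ∧
      ∀ h, L h = vecMulVec (u' h) (star (u x)) + vecMulVec (u x) (star (u' h)) :=
  let _ := Matrix.normedAddCommGroup (m := m) (n := m) (α := 𝕜)
  let _ := Matrix.normedSpace (R := ℝ) (m := m) (n := m) (α := 𝕜)
  (vecMulVecBilin ℝ ℝ).exists_hasFDerivAt_bilinear hu hu.star

variable [DecidableEq m]

theorem HasFDerivAt.exists_matrix_inv {G : E → Matrix m m 𝕜} {G' : E →L[ℝ] Matrix m m 𝕜}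
    (hG : HasFDerivAt G G' x) (hx : IsUnit (G x)) :
    ∃ L : E →L[ℝ] Matrix m m 𝕜, HasFDerivAt (fun y => (G y)⁻¹) L x ∧
      ∀ h, L h = -((G x)⁻¹ * G' h * (G x)⁻¹) := by
  let _ := Matrix.linftyOpNormedRing (n := m) (α := 𝕜)
  let _ := Matrix.linftyOpNormedAlgebra (R := ℝ) (n := m) (α := 𝕜)
  obtain ⟨u, hu⟩ := hx
  have hinv : (G x)⁻¹ = ↑u⁻¹ := by rw [nonsing_inv_eq_ringInverse, ← hu, Ring.inverse_unit]
  have hu_inv := hasFDerivAt_ringInverse (𝕜 := ℝ) u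
  rw [hu] at hu_inv
  refine ⟨(-mulLeftRight ℝ _ ↑u⁻¹ ↑u⁻¹).comp G', ?_, fun h => ?_⟩
  · have hcomp := hu_inv.comp x hG
    rwa [show Ring.inverse ∘ G = fun y => (G y)⁻¹ from
      funext fun y => (nonsing_inv_eq_ringInverse _).symm] at hcomp
  · rw [hinv]
    rfl

theorem exists_hasFDerivAt_re_star_dotProduct_inv_mulVec {v : E → m → 𝕜}
    {v' : E →L[ℝ] m → 𝕜} {G : E → Matrix m m 𝕜} {G' : E →L[ℝ] Matrix m m 𝕜}
    (hv : HasFDerivAt v v' x) (hG : HasFDerivAt G G' x) (hGx : (G x).IsHermitian)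
    (hx : IsUnit (G x)) :
    ∃ L : E →L[ℝ] ℝ,
      HasFDerivAt (fun y => RCLike.re (star (v y) ⬝ᵥ (G y)⁻¹ *ᵥ v y)) L x ∧
      ∀ h, L h = 2 * RCLike.re (star ((G x)⁻¹ *ᵥ v x) ⬝ᵥ v' h)
        - RCLike.re (star ((G x)⁻¹ *ᵥ v x) ⬝ᵥ G' h *ᵥ ((G x)⁻¹ *ᵥ v x)) := by
  let _ := Matrix.normedAddCommGroup (m := m) (n := m) (α := 𝕜)
  let _ := Matrix.normedSpace (R := ℝ) (m := m) (n := m) (α := 𝕜)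
  obtain ⟨Li, hLi, hLi_apply⟩ := hG.exists_matrix_inv hx
  obtain ⟨Lw, hLw, hLw_apply⟩ := (mulVecBilin ℝ ℝ).exists_hasFDerivAt_bilinear hLi hv
  obtain ⟨Lq, hLq, hLq_apply⟩ := (dotProductBilin ℝ ℝ).exists_hasFDerivAt_bilinear hv.star hLw
  -- `Li h` in `hLw_apply` carries the local normed instances, so `hLi_apply` applies up to defeq
  have hLw_apply' : ∀ h, Lw h = -((G x)⁻¹ * G' h * (G x)⁻¹) *ᵥ v x + (G x)⁻¹ *ᵥ v' h :=
    fun h => by rw [hLw_apply, ← hLi_apply h]; rfl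
  refine ⟨RCLike.reCLM.comp Lq, RCLike.reCLM.hasFDerivAt.comp x hLq, fun h => ?_⟩
  set y := (G x)⁻¹ *ᵥ v x
  have hy : ∀ w, star (v x) ⬝ᵥ (G x)⁻¹ *ᵥ w = star y ⬝ᵥ w := fun w => by
    rw [dotProduct_mulVec, star_mulVec, hGx.inv.eq]
  have hstar : star (v' h) ⬝ᵥ y = star (star y ⬝ᵥ v' h) := star_dotProduct _ _
  simp only [coe_comp, Function.comp_apply, RCLike.reCLM_apply, hLq_apply, hLw_apply',
    dotProductBilin_apply_apply, mulVecBilin_apply, ContinuousLinearEquiv.coe_coe, starL'_apply]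
  rw [hstar, neg_mulVec, ← mulVec_mulVec, ← mulVec_mulVec, dotProduct_add, dotProduct_neg, hy, hy]
  simp only [map_add, map_neg, RCLike.star_def, RCLike.conj_re]
  ring

end MatrixCalculus

section RankOne

variable {𝕜 m n : Type*} [RCLike 𝕜] [Fintype n]

theorem mul_vecMulVec_star_mul_conjTranspose (B : Matrix m n 𝕜) (u : n → 𝕜) :
    B * vecMulVec u (star u) * Bᴴ = vecMulVec (B *ᵥ u) (star (B *ᵥ u)) := by
  rw [mul_vecMulVec, vecMulVec_mul, star_mulVec]

theorem star_conjTranspose_mulVec_dotProduct [Fintype m] (B : Matrix m n 𝕜) (y : m → 𝕜)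
    (u : n → 𝕜) : star (Bᴴ *ᵥ y) ⬝ᵥ u = star y ⬝ᵥ B *ᵥ u := by
  rw [star_mulVec, conjTranspose_conjTranspose, dotProduct_mulVec]

theorem vecMulVec_star_mulVec (a b w : n → 𝕜) :
    vecMulVec a (star b) *ᵥ w = (star b ⬝ᵥ w) • a := by
  rw [vecMulVec_mulVec, op_smul_eq_smul]

theorem re_star_dotProduct_vecMulVec_add_mulVec (y a b : n → 𝕜) :
    RCLike.re (star y ⬝ᵥ (vecMulVec a (star b) + vecMulVec b (star a)) *ᵥ y)
      = 2 * RCLike.re (star (star y ⬝ᵥ b) * (star y ⬝ᵥ a)) := by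
  rw [add_mulVec, vecMulVec_star_mulVec, vecMulVec_star_mulVec, dotProduct_add, dotProduct_smul,
    dotProduct_smul, smul_eq_mul, smul_eq_mul, star_dotProduct b, star_dotProduct a]
  have hconj : star (star y ⬝ᵥ a) * (star y ⬝ᵥ b)
      = star (star (star y ⬝ᵥ b) * (star y ⬝ᵥ a)) := by
    rw [star_mul', star_star, mul_comm]
  rw [hconj, map_add, RCLike.star_def, RCLike.conj_re]
  ring

theorem star_conjTranspose_mul_vecMulVec_mul_mulVec_dotProduct [Fintype m] (B : Matrix m n 𝕜)
    (y : m → 𝕜) (u w : n → 𝕜) :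
    star ((Bᴴ * vecMulVec y (star y) * B) *ᵥ u) ⬝ᵥ w
      = star (star y ⬝ᵥ B *ᵥ u) * (star y ⬝ᵥ B *ᵥ w) := by
  have hB := mul_vecMulVec_star_mul_conjTranspose Bᴴ y
  rw [conjTranspose_conjTranspose] at hB
  rw [hB, vecMulVec_star_mulVec, star_smul, smul_dotProduct, smul_eq_mul,
    star_conjTranspose_mulVec_dotProduct, star_conjTranspose_mulVec_dotProduct]

end RankOne

theorem exists_hasFDerivAt_mulVec_apply {𝕜 ι m n : Type*} [RCLike 𝕜] [Fintype ι] [Fintype n]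
    (M : Matrix m n 𝕜) (j : ι) (x : ι → n → 𝕜) :
    ∃ L : (ι → n → 𝕜) →L[ℝ] m → 𝕜, HasFDerivAt (fun y => M *ᵥ y j) L x ∧
      ∀ h, L h = M *ᵥ h j := by
  let L := (M.mulVecLin.restrictScalars ℝ).comp (LinearMap.proj (φ := fun _ : ι => n → 𝕜) j)
  exact ⟨L.toContinuousLinearMap, L.toContinuousLinearMap.hasFDerivAt, fun _ => rfl⟩

theorem Gmat_eq_sum_vecMulVec {n d ℓ : ℕ} (B : Fin n → Fin n → Matrix (Fin ℓ) (Fin d) ℂ)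
    (x : Fin n → Fin d → ℂ) (i : Fin n) :
    Gmat B x i = ∑ j, vecMulVec (B i j *ᵥ x j) (star (B i j *ᵥ x j)) :=
  Finset.sum_congr rfl fun j _ => mul_vecMulVec_star_mul_conjTranspose (B i j) (x j)

theorem exists_hasFDerivAt_Gmat {n d ℓ : ℕ} (B : Fin n → Fin n → Matrix (Fin ℓ) (Fin d) ℂ)
    (x : Fin n → Fin d → ℂ) (i : Fin n) :
    ∃ L : (Fin n → Fin d → ℂ) →L[ℝ] Matrix (Fin ℓ) (Fin ℓ) ℂ,
      HasFDerivAt (fun y => Gmat B y i) L x ∧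
      ∀ h, L h = ∑ j, (vecMulVec (B i j *ᵥ h j) (star (B i j *ᵥ x j))
        + vecMulVec (B i j *ᵥ x j) (star (B i j *ᵥ h j))) := by
  have hterm : ∀ j, ∃ L : (Fin n → Fin d → ℂ) →L[ℝ] Matrix (Fin ℓ) (Fin ℓ) ℂ,
      HasFDerivAt (fun y => vecMulVec (B i j *ᵥ y j) (star (B i j *ᵥ y j))) L x ∧
      ∀ h, L h = vecMulVec (B i j *ᵥ h j) (star (B i j *ᵥ x j))
        + vecMulVec (B i j *ᵥ x j) (star (B i j *ᵥ h j)) := fun j => by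
    obtain ⟨Lu, hLu, hLu_apply⟩ := exists_hasFDerivAt_mulVec_apply (B i j) j x
    obtain ⟨L, hL, hL_apply⟩ := exists_hasFDerivAt_vecMulVec_star_self hLu
    exact ⟨L, hL, fun h => by rw [hL_apply, hLu_apply]⟩
  choose L hL hL_apply using hterm
  let _ := Matrix.normedAddCommGroup (m := Fin ℓ) (n := Fin ℓ) (α := ℂ)
  let _ := Matrix.normedSpace (R := ℝ) (m := Fin ℓ) (n := Fin ℓ) (α := ℂ)
  refine ⟨∑ j, L j, ?_, fun h => ?_⟩
  · simp_rw [Gmat_eq_sum_vecMulVec]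
    exact HasFDerivAt.fun_sum fun j _ => hL j
  · rw [_root_.sum_apply]
    exact Finset.sum_congr rfl fun j _ => hL_apply j h

/-- **Lemma 1**: with `yᵢ = Gᵢ(x)⁻¹ Aᵢ xᵢ`, the ratio `Mᵢ` is ℝ-differentiable
at `x`, with ℝ-Fréchet derivative in direction `h = (h₁, …, hₙ)` equal to
`2 Re{(Aᵢᴴ yᵢ − Bᵢᵢᴴ yᵢ yᵢᴴ Bᵢᵢ xᵢ)ᴴ hᵢ} − 2 ∑_{j ≠ i} Re{(Bᵢⱼᴴ yᵢ yᵢᴴ Bᵢⱼ xⱼ)ᴴ hⱼ}`. -/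
theorem Mratio_hasFDerivAt {n d ℓ : ℕ}
    (A : Fin n → Matrix (Fin ℓ) (Fin d) ℂ)
    (B : Fin n → Fin n → Matrix (Fin ℓ) (Fin d) ℂ)
    (x : Fin n → Fin d → ℂ) (i : Fin n)
    (hG : (Gmat B x i).PosDef)
    (y : Fin ℓ → ℂ) (hy : y = (Gmat B x i)⁻¹ *ᵥ (A i *ᵥ x i)) :
    ∃ L : (Fin n → Fin d → ℂ) →L[ℝ] ℝ,
      HasFDerivAt (fun x' => Mratio A B x' i) L x ∧
      ∀ h : Fin n → Fin d → ℂ,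
        L h = 2 * (star ((A i)ᴴ *ᵥ y
              - ((B i i)ᴴ * vecMulVec y (star y) * B i i) *ᵥ x i) ⬝ᵥ h i).re
          - 2 * ∑ j ∈ Finset.univ.erase i,
              (star (((B i j)ᴴ * vecMulVec y (star y) * B i j) *ᵥ x j) ⬝ᵥ h j).re := by
  obtain ⟨Lv, hLv, hLv_apply⟩ := exists_hasFDerivAt_mulVec_apply (A i) i x
  obtain ⟨LG, hLG, hLG_apply⟩ := exists_hasFDerivAt_Gmat B x i
  obtain ⟨L, hL, hL_apply⟩ :=
    exists_hasFDerivAt_re_star_dotProduct_inv_mulVec hLv hLG hG.isHermitian hG.isUnit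
  refine ⟨L, hL, fun h => ?_⟩
  rw [hL_apply, ← hy, hLv_apply, hLG_apply, sum_mulVec, dotProduct_sum, map_sum]
  simp_rw [re_star_dotProduct_vecMulVec_add_mulVec,
    ← star_conjTranspose_mul_vecMulVec_mul_mulVec_dotProduct]
  rw [← star_conjTranspose_mulVec_dotProduct (A i), ← Finset.mul_sum, star_sub, sub_dotProduct,
    ← Finset.sum_erase_add _ _ (Finset.mem_univ i)]
  simp only [RCLike.re_to_complex, Complex.sub_re]
  ring
end

section
/- With the sum-of-weighted-ratios setup, let X ⊆ (ℂ^d)^n be a nonempty set such that G_i(x) is positive definite for every x ∈ X and every i. Let x' ∈ X, set y_i = Y_i(x') = G_i(x')^{-1} A_i x'_i, and suppose x'' ∈ X satisfies f_q(x'', y) ≥ f_q(x, y) for all x ∈ X. Then f_o(x'') ≥ f_o(x'), i.e., one iteration of the conventional quadratic-transform update does not decrease the original objective. -/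
open Matrix ComplexOrder


lemma key {ℓ : ℕ} {G : Matrix (Fin ℓ) (Fin ℓ) ℂ} (hG : G.PosDef) (a u : Fin ℓ → ℂ) :
    2 * (star a ⬝ᵥ u).re - (star u ⬝ᵥ G *ᵥ u).re ≤ (star a ⬝ᵥ G⁻¹ *ᵥ a).re := by
  have hdet : IsUnit G.det := (Matrix.isUnit_iff_isUnit_det G).1 hG.isUnit
  set z : Fin ℓ → ℂ := u - G⁻¹ *ᵥ a with hz
  have h0 : 0 ≤ (star z ⬝ᵥ G *ᵥ z).re := hG.posSemidef.re_dotProduct_nonneg z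
  have hGa : G *ᵥ (G⁻¹ *ᵥ a) = a := by
    rw [mulVec_mulVec, Matrix.mul_nonsing_inv _ hdet, one_mulVec]
  have hstar : star (G⁻¹ *ᵥ a) = star a ᵥ* G⁻¹ := by
    rw [star_mulVec, hG.isHermitian.inv.eq]
  have expand : star z ⬝ᵥ G *ᵥ z
      = star u ⬝ᵥ G *ᵥ u - star u ⬝ᵥ a - star a ⬝ᵥ u + star a ⬝ᵥ G⁻¹ *ᵥ a := by
    have h3 : (star a ᵥ* G⁻¹) ⬝ᵥ (G *ᵥ u) = star a ⬝ᵥ u := by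
      rw [← dotProduct_mulVec, mulVec_mulVec, Matrix.nonsing_inv_mul _ hdet, one_mulVec]
    have h4 : (star a ᵥ* G⁻¹) ⬝ᵥ a = star a ⬝ᵥ G⁻¹ *ᵥ a := by
      rw [← dotProduct_mulVec]
    rw [hz, star_sub, mulVec_sub, hGa, sub_dotProduct, dotProduct_sub, dotProduct_sub,
      hstar, h3, h4]
    ring
  have hconj : (star u ⬝ᵥ a).re = (star a ⬝ᵥ u).re := by
    rw [star_dotProduct]; simp
  have := expand ▸ h0
  have hre : 0 ≤ (star u ⬝ᵥ G *ᵥ u).re - (star u ⬝ᵥ a).re - (star a ⬝ᵥ u).re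
      + (star a ⬝ᵥ G⁻¹ *ᵥ a).re := by
    simpa [Complex.add_re, Complex.sub_re] using this
  rw [hconj] at hre
  linarith

lemma key_eq {ℓ : ℕ} {G : Matrix (Fin ℓ) (Fin ℓ) ℂ} (hG : G.PosDef) (a : Fin ℓ → ℂ) :
    2 * (star a ⬝ᵥ (G⁻¹ *ᵥ a)).re - (star (G⁻¹ *ᵥ a) ⬝ᵥ G *ᵥ (G⁻¹ *ᵥ a)).re
      = (star a ⬝ᵥ G⁻¹ *ᵥ a).re := by
  have hdet : IsUnit G.det := (Matrix.isUnit_iff_isUnit_det G).1 hG.isUnit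
  have hGa : G *ᵥ (G⁻¹ *ᵥ a) = a := by
    rw [mulVec_mulVec, Matrix.mul_nonsing_inv _ hdet, one_mulVec]
  have hstar : star (G⁻¹ *ᵥ a) = star a ᵥ* G⁻¹ := by
    rw [star_mulVec, hG.isHermitian.inv.eq]
  rw [hGa, hstar, ← dotProduct_mulVec]
  ring


lemma quad_expand {ℓ' : ℕ} {k : ℕ} (M : Fin k → Matrix (Fin ℓ') (Fin ℓ') ℂ) (v : Fin ℓ' → ℂ) :
    ∑ j, (star v ⬝ᵥ (M j) *ᵥ v) = star v ⬝ᵥ (∑ j, M j) *ᵥ v := by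
  have h : (∑ j, M j) *ᵥ v = ∑ j, (M j) *ᵥ v := by
    ext r
    simp only [Matrix.mulVec, dotProduct, Matrix.sum_apply, Finset.sum_mul,
      Finset.sum_apply]
    rw [Finset.sum_comm]
  rw [h]
  simp only [dotProduct, Finset.sum_apply, Finset.mul_sum]
  rw [Finset.sum_comm]

/-- **Monotone ascent of the conventional quadratic transform** (MM content
of Proposition 2): if `yᵢ = Gᵢ(x')⁻¹ Aᵢ x'ᵢ` and `x''` maximizes
`f_q(·, y)` over `X`, then `f_o(x'') ≥ f_o(x')`. -/
theorem quadratic_transform_ascent {n d ℓ : ℕ} (ω : Fin n → ℝ)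
    (hω : ∀ i, 0 < ω i)
    (A : Fin n → Matrix (Fin ℓ) (Fin d) ℂ)
    (B : Fin n → Fin n → Matrix (Fin ℓ) (Fin d) ℂ)
    (X : Set (Fin n → Fin d → ℂ)) (hXne : X.Nonempty)
    (hG : ∀ x ∈ X, ∀ i, (Gmat B x i).PosDef)
    (x' : Fin n → Fin d → ℂ) (hx' : x' ∈ X)
    (y : Fin n → Fin ℓ → ℂ)
    (hy : ∀ i, y i = (Gmat B x' i)⁻¹ *ᵥ (A i *ᵥ x' i))
    (x'' : Fin n → Fin d → ℂ) (hx'' : x'' ∈ X)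
    (hmax : ∀ x ∈ X, fq ω A B x y ≤ fq ω A B x'' y) :
    fo ω A B x' ≤ fo ω A B x'' := by
  have hsum : ∀ x : Fin n → Fin d → ℂ, ∀ i,
      ∑ j, (star (y i) ⬝ᵥ (B i j * vecMulVec (x j) (star (x j)) * (B i j)ᴴ) *ᵥ y i).re
        = (star (y i) ⬝ᵥ (Gmat B x i) *ᵥ y i).re := by
    intro x i
    rw [← Complex.re_sum, quad_expand]
    rfl
  have hub : ∀ x ∈ X, fq ω A B x y ≤ fo ω A B x := by
    intro x hx
    apply Finset.sum_le_sum
    intro i _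
    apply mul_le_mul_of_nonneg_left _ (hω i).le
    rw [hsum x i]
    exact key (hG x hx i) _ _
  have heq : fo ω A B x' = fq ω A B x' y := by
    apply Finset.sum_congr rfl
    intro i _
    congr 1
    rw [hsum x' i, hy i, Mratio, key_eq (hG x' hx' i)]
  calc fo ω A B x' = fq ω A B x' y := heq
    _ ≤ fq ω A B x'' y := hmax x' hx'
    _ ≤ fo ω A B x'' := hub x'' hx''
end

section
/- Let E be a finite-dimensional real inner-product space, x* ∈ E, R > 0, and X = {x ∈ E : ‖x − x*‖ ≤ R}. Let f : E → ℝ be concave on X with f(x*) ≥ f(x) for all x ∈ X. Let Λ ≥ 0, L ≥ 0 with ΛR² + LR³ > 0, and let (x^k)_{k ≥ 0} be a sequence in X together with functions g_k : E → ℝ (k ≥ 1) such that for every k ≥ 1: (i) g_k(x) ≤ f(x) for all x ∈ X; (ii) f(x) − g_k(x) ≤ (Λ/2)·‖x − x^{k−1}‖² + (L/6)·‖x − x^{k−1}‖³ for all x ∈ X; (iii) g_k(x^k) ≥ g_k(x) for all x ∈ X. Then f(x*) − f(x^1) ≤ ΛR²/2 + LR³/6, and for every k ≥ 2, f(x*)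 − f(x^k) ≤ (2ΛR² + 2LR³/3)/(k + 3). -/
lemma mm_gap_bound (Λ L R r α : ℝ) (hΛ : 0 ≤ Λ) (hL : 0 ≤ L) (hr0 : 0 ≤ r)
    (hr : r ≤ R) (hα0 : 0 ≤ α) (hα1 : α ≤ 1) :
    Λ / 2 * (α * r) ^ 2 + L / 6 * (α * r) ^ 3 ≤ α ^ 2 * (Λ * R ^ 2 / 2 + L * R ^ 3 / 6) := by
  have hα3 : α ^ 3 ≤ α ^ 2 := pow_le_pow_of_le_one hα0 hα1 (by norm_num)
  have hr2 : r ^ 2 ≤ R ^ 2 := by nlinarith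
  have hr3 : r ^ 3 ≤ R ^ 3 := by nlinarith
  have t1 : Λ / 2 * α ^ 2 * r ^ 2 ≤ Λ / 2 * α ^ 2 * R ^ 2 :=
    mul_le_mul_of_nonneg_left hr2 (by positivity)
  have t2 : L / 6 * α ^ 3 * r ^ 3 ≤ L / 6 * α ^ 3 * R ^ 3 :=
    mul_le_mul_of_nonneg_left hr3 (by positivity)
  have t3 : L / 6 * R ^ 3 * α ^ 3 ≤ L / 6 * R ^ 3 * α ^ 2 :=
    mul_le_mul_of_nonneg_left hα3
      (mul_nonneg (by linarith) (pow_nonneg (hr0.trans hr) 3))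
  nlinarith [t1, t2, t3]


/-- **MM convergence-rate theorem** (Proposition 3).  On the ball
`X = {x : ‖x − x*‖ ≤ R}` where `f` is concave and maximized at `x*`, if each
surrogate `g_k` minorizes `f` on `X`, touches it at `x^{k−1}` up to the gap
`(Λ/2)‖x − x^{k−1}‖² + (L/6)‖x − x^{k−1}‖³`, and is maximized over `X` by
`x^k`, then `f(x*) − f(x¹) ≤ ΛR²/2 + LR³/6` and
`f(x*) − f(x^k) ≤ (2ΛR² + 2LR³/3)/(k + 3)` for `k ≥ 2`. -/
theorem mm_convergence_rate
    {E : Type*} [NormedAddCommGroup E] [InnerProductSpace ℝ E]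
    [FiniteDimensional ℝ E]
    (xstar : E) (R : ℝ) (hR : 0 < R) (f : E → ℝ)
    (hconc : ConcaveOn ℝ (Metric.closedBall xstar R) f)
    (hopt : ∀ z ∈ Metric.closedBall xstar R, f z ≤ f xstar)
    (Λ L : ℝ) (hΛ : 0 ≤ Λ) (hL : 0 ≤ L)
    (hpos : 0 < Λ * R ^ 2 + L * R ^ 3)
    (x : ℕ → E) (hx : ∀ k, x k ∈ Metric.closedBall xstar R)
    (g : ℕ → E → ℝ)
    (hminor : ∀ k, 1 ≤ k → ∀ z ∈ Metric.closedBall xstar R, g k z ≤ f z)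
    (hgap : ∀ k, 1 ≤ k → ∀ z ∈ Metric.closedBall xstar R,
      f z - g k z ≤ Λ / 2 * ‖z - x (k - 1)‖ ^ 2 + L / 6 * ‖z - x (k - 1)‖ ^ 3)
    (hmax : ∀ k, 1 ≤ k → ∀ z ∈ Metric.closedBall xstar R, g k z ≤ g k (x k)) :
    f xstar - f (x 1) ≤ Λ * R ^ 2 / 2 + L * R ^ 3 / 6 ∧
    ∀ k : ℕ, 2 ≤ k →
      f xstar - f (x k) ≤ (2 * Λ * R ^ 2 + 2 * L * R ^ 3 / 3) / (k + 3) := by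
  set C : ℝ := Λ * R ^ 2 / 2 + L * R ^ 3 / 6 with hC
  have hΛR : 0 ≤ Λ * R ^ 2 := mul_nonneg hΛ (sq_nonneg R)
  have hLR : 0 ≤ L * R ^ 3 := mul_nonneg hL (by positivity)
  have hCpos : 0 < C := by rw [hC]; linarith
  clear_value C
  have hxstarX : xstar ∈ Metric.closedBall xstar R := Metric.mem_closedBall_self hR.le
  -- one-step recursion
  have key : ∀ m : ℕ, ∀ α : ℝ, 0 ≤ α → α ≤ 1 →
      f xstar - f (x (m + 1)) ≤ (1 - α) * (f xstar - f (x m)) + α ^ 2 * C := by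
    intro m α hα0 hα1
    set z : E := x m + α • (xstar - x m) with hz
    have hr : ‖xstar - x m‖ ≤ R := by
      have h := hx m
      rw [Metric.mem_closedBall, dist_eq_norm] at h
      rw [← norm_neg]
      simpa [neg_sub] using h
    have hzX : z ∈ Metric.closedBall xstar R := by
      rw [Metric.mem_closedBall, dist_eq_norm]
      have hzx : z - xstar = (1 - α) • (x m - xstar) := by rw [hz]; module
      rw [hzx, norm_smul, Real.norm_eq_abs, abs_of_nonneg (by linarith)]
      have hxm : ‖x m - xstar‖ ≤ R := by
        have h := hx m
        rwa [Metric.mem_closedBall, dist_eq_norm] at h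
      nlinarith [norm_nonneg (x m - xstar)]
    have hzeq : z = (1 - α) • x m + α • xstar := by rw [hz]; module
    have hconcz : (1 - α) * f (x m) + α * f xstar ≤ f z := by
      have h : (1 - α) • f (x m) + α • f xstar ≤ f ((1 - α) • x m + α • xstar) :=
        hconc.2 (hx m) hxstarX (by linarith) hα0 (by ring)
      rw [hzeq]
      simpa [smul_eq_mul] using h
    have h1 : g (m + 1) (x (m + 1)) ≤ f (x (m + 1)) :=
      hminor (m + 1) (by omega) _ (hx (m + 1))
    have h2 : g (m + 1) z ≤ g (m + 1) (x (m + 1)) := hmax (m + 1) (by omega) z hzX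
    have h3 : f z - g (m + 1) z ≤ Λ / 2 * ‖z - x m‖ ^ 2 + L / 6 * ‖z - x m‖ ^ 3 := by
      simpa using hgap (m + 1) (by omega) z hzX
    have hnz : ‖z - x m‖ = α * ‖xstar - x m‖ := by
      rw [hz]
      simp [norm_smul, abs_of_nonneg hα0]
    have hgapb : Λ / 2 * ‖z - x m‖ ^ 2 + L / 6 * ‖z - x m‖ ^ 3 ≤ α ^ 2 * C := by
      rw [hnz, hC]
      exact mm_gap_bound Λ L R _ α hΛ hL (norm_nonneg _) hr hα0 hα1
    nlinarith [h1, h2, h3, hconcz, hgapb]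
  have first : f xstar - f (x 1) ≤ C := by
    have h := key 0 1 zero_le_one le_rfl
    simpa using h
  -- inductive rate
  have rate : ∀ k : ℕ, 1 ≤ k → f xstar - f (x k) ≤ 4 * C / (k + 3) := by
    intro k hk
    induction k with
    | zero => omega
    | succ n ih =>
      rcases Nat.lt_or_ge n 1 with hn | hn
      · have hn0 : n = 0 := by omega
        subst hn0
        push_cast
        norm_num
        linarith
      · have ihn := ih hn
        have hNpos : (0 : ℝ) < (n : ℝ) + 3 := by positivity
        set N : ℝ := (n : ℝ) + 3 with hN
        have hN3 : (3 : ℝ) ≤ N := by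
          rw [hN]
          have : (0 : ℝ) ≤ (n : ℝ) := Nat.cast_nonneg n
          linarith
        clear_value N
        set α : ℝ := 2 / N with hα
        have hα0 : 0 ≤ α := by rw [hα]; positivity
        have hα1 : α ≤ 1 := by rw [hα, div_le_one hNpos]; linarith
        clear_value α
        have hk2 := key n α hα0 hα1
        have h1α : 0 ≤ 1 - α := by linarith
        have step : (1 - α) * (f xstar - f (x n)) ≤ (1 - α) * (4 * C / N) :=
          mul_le_mul_of_nonneg_left ihn h1α
        have harith : (1 - α) * (4 * C / N) + α ^ 2 * C
            = 4 * C / (N + 1) - 4 * C / (N ^ 2 * (N + 1)) := by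
          rw [hα]
          have hN0 : N ≠ 0 := ne_of_gt hNpos
          have hN1 : N + 1 ≠ 0 := by positivity
          field_simp
          ring
        have hpos2 : 0 < 4 * C / (N ^ 2 * (N + 1)) := by positivity
        have hcast : ((n + 1 : ℕ) : ℝ) + 3 = N + 1 := by rw [hN]; push_cast; ring
        rw [hcast]
        linarith
  refine ⟨first, fun k hk => ?_⟩
  have h := rate k (by omega)
  have h4C : 4 * C = 2 * Λ * R ^ 2 + 2 * L * R ^ 3 / 3 := by rw [hC]; ring
  rw [← h4C]
  exact h
end

section
/- With the ratio setup, let μ_i > 0 for i = 1, …, n and define the logarithmic FP objective g_o(x) = ∑_{i=1}^n μ_i log(1 + M_i(x)). Fix x such that every G_i(x) is positive definite; set t_i = M_i(x), F_i(x) = A_i x_i x_i^H A_i^H + G_i(x), ŷ_i = F_i(x)^{-1} A_i x_i, and D̂_i = μ_i(1 + t_i)·A_i^H ŷ_i ŷ_i^H A_i + ∑_{j=1}^n μ_j(1 + t_j)·B_{ji}^H ŷ_j ŷ_j^H B_{ji}. Then g_o is differentiable over ℝ at x and its ℝ-Fréchet derivative in any direction h = (h_1, …, h_n) ∈ (ℂ^d)^n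 equals D g_o(x)[h] = 2·∑_{i=1}^n Re{(μ_i(1 + t_i)·A_i^H ŷ_i − D̂_i x_i)^H h_i}. -/
open Matrix ComplexOrder

/-- The logarithmic FP objective `g_o(x) = ∑ᵢ μᵢ log(1 + Mᵢ(x))`. -/
noncomputable def go {n d ℓ : ℕ} (μ : Fin n → ℝ)
    (A : Fin n → Matrix (Fin ℓ) (Fin d) ℂ)
    (B : Fin n → Fin n → Matrix (Fin ℓ) (Fin d) ℂ)
    (x : Fin n → Fin d → ℂ) : ℝ :=
  ∑ i, μ i * Real.log (1 + Mratio A B x i)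


/-!
Write `aᵢ = Aᵢxᵢ` and `wᵢ = Gᵢ(x)⁻¹aᵢ`. Since `d(G⁻¹) = -G⁻¹ (dG) G⁻¹` and `G⁻¹` is Hermitian,
`DMᵢ(x)[h] = 2 Re(wᵢᴴ Aᵢhᵢ) - Re(wᵢᴴ DGᵢ(x)[h] wᵢ)` with
`DGᵢ(x)[h] = ∑ⱼ Bᵢⱼ (hⱼxⱼᴴ + xⱼhⱼᴴ) Bᵢⱼᴴ`. The rank-one update `Fᵢ = aᵢaᵢᴴ + Gᵢ` satisfies
`Fᵢwᵢ = (1 + tᵢ) aᵢ` (Sherman–Morrison), so `wᵢ = (1 + tᵢ) ŷᵢ`, and the chain rule for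
`log (1 + Mᵢ)` expresses `Dg_o(x)[h]` through the `ŷᵢ`. On the other side `ŷᵢᴴ aᵢ = tᵢ / (1 + tᵢ)`
collapses the `Aᵢ`-part of `D̂ᵢxᵢ`, and exchanging the double sum over `(i, j)` in the `B`-terms
matches the two expressions.
-/

section MatrixCalculus

-- Any norm on matrices gives the same derivatives; the L∞ operator norm makes them a normed
-- algebra, which the derivative of inversion requires.
attribute [local instance] Matrix.linftyOpNormedAddCommGroup Matrix.linftyOpNormedRing
  Matrix.linftyOpNormedSpace Matrix.linftyOpNormedAlgebra

variable {E : Type*} [NormedAddCommGroup E] [NormedSpace ℝ E] {ι : Type*} [Fintype ι]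
  [DecidableEq ι] {x : E}

theorem HasFDerivAt.matrix_inv {G : E → Matrix ι ι ℂ} {G' : E →L[ℝ] Matrix ι ι ℂ}
    (hG : HasFDerivAt G G' x) (hGx : IsUnit (G x)) :
    ∃ L : E →L[ℝ] Matrix ι ι ℂ, HasFDerivAt (fun y => (G y)⁻¹) L x ∧
      ∀ h, L h = -((G x)⁻¹ * G' h * (G x)⁻¹) := by
  have h := hasFDerivAt_ringInverse (𝕜 := ℝ) hGx.unit
  rw [Matrix.coe_units_inv, IsUnit.unit_spec] at h
  exact ⟨_, (h.comp x hG).congr_of_eventuallyEq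
    (.of_forall fun y => nonsing_inv_eq_ringInverse _), fun h => rfl⟩

theorem HasFDerivAt.re_star_dotProduct_inv_mulVec {a : E → ι → ℂ} {a' : E →L[ℝ] ι → ℂ}
    {G : E → Matrix ι ι ℂ} {G' : E →L[ℝ] Matrix ι ι ℂ}
    (ha : HasFDerivAt a a' x) (hG : HasFDerivAt G G' x) (hGx : IsUnit (G x))
    (hGh : (G x).IsHermitian) :
    ∃ L : E →L[ℝ] ℝ, HasFDerivAt (fun y => (star (a y) ⬝ᵥ (G y)⁻¹ *ᵥ a y).re) L x ∧
      ∀ h, L h = 2 * (star ((G x)⁻¹ *ᵥ a x) ⬝ᵥ a' h).re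
        - (star ((G x)⁻¹ *ᵥ a x) ⬝ᵥ G' h *ᵥ ((G x)⁻¹ *ᵥ a x)).re := by
  obtain ⟨Linv, hinv, hLinv⟩ := hG.matrix_inv hGx
  have hmv := (mulVecBilin ℝ ℝ).toContinuousBilinearMap.hasFDerivAt_of_bilinear hinv ha
  have hq := (dotProductBilin ℝ ℝ).toContinuousBilinearMap.hasFDerivAt_of_bilinear ha.star hmv
  refine ⟨_, Complex.reCLM.hasFDerivAt.comp x hq, fun h => ?_⟩
  have hGinv : ∀ v, star (a x) ⬝ᵥ (G x)⁻¹ *ᵥ v = star ((G x)⁻¹ *ᵥ a x) ⬝ᵥ v := fun v => by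
    rw [star_mulVec, hGh.inv.eq, dotProduct_mulVec]
  change (star (a x) ⬝ᵥ ((G x)⁻¹ *ᵥ a' h + Linv h *ᵥ a x)
    + star (a' h) ⬝ᵥ (G x)⁻¹ *ᵥ a x).re = _
  rw [hLinv, dotProduct_add, neg_mulVec, dotProduct_neg, ← mulVec_mulVec, ← mulVec_mulVec,
    hGinv, hGinv, star_dotProduct (a' h), Complex.add_re, Complex.add_re, Complex.neg_re,
    Complex.star_def, Complex.conj_re]
  ring

theorem hasFDerivAt_Gmat {n d ℓ : ℕ} (B : Fin n → Fin n → Matrix (Fin ℓ) (Fin d) ℂ)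
    (x : Fin n → Fin d → ℂ) (i : Fin n) :
    ∃ L : (Fin n → Fin d → ℂ) →L[ℝ] Matrix (Fin ℓ) (Fin ℓ) ℂ,
      HasFDerivAt (fun y => Gmat B y i) L x ∧ ∀ h, L h =
        ∑ j, B i j * (vecMulVec (h j) (star (x j)) + vecMulVec (x j) (star (h j))) * (B i j)ᴴ := by
  let Ψ : (Fin n → Fin d → ℂ) →ₗ[ℝ] (Fin n → Fin d → ℂ) →ₗ[ℝ] Matrix (Fin ℓ) (Fin ℓ) ℂ :=
    ∑ j, ((vecMulVecBilin ℝ ℝ).compl₁₂ (LinearMap.proj j)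
      ((starL' ℝ : (Fin d → ℂ) ≃L[ℝ] _).toLinearMap ∘ₗ LinearMap.proj j)).compr₂
        (mulRightLinearMap _ ℝ (B i j)ᴴ ∘ₗ mulLeftLinearMap _ ℝ (B i j))
  have hΨ : ∀ u v, Ψ u v = ∑ j, B i j * vecMulVec (u j) (star (v j)) * (B i j)ᴴ := by
    intro u v
    simp [Ψ, LinearMap.sum_apply]
  have hd := Ψ.toContinuousBilinearMap.hasFDerivAt_of_bilinear (hasFDerivAt_id x)
    (hasFDerivAt_id x)
  refine ⟨_, hd.congr_of_eventuallyEq (.of_forall fun y => (hΨ y y).symm), fun h => ?_⟩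
  change Ψ x h + Ψ h x = _
  simp only [hΨ, ← Finset.sum_add_distrib, ← Matrix.add_mul, ← Matrix.mul_add, add_comm]

end MatrixCalculus

section MatrixAlgebra

variable {R : Type*} [CommRing R] {m k : Type*} [Fintype m] [Fintype k]

theorem mul_vecMulVec_mul_mulVec (N : Matrix m k R) (P : Matrix k m R) (u v : k → R)
    (z : m → R) : (N * vecMulVec u v * P) *ᵥ z = (v ⬝ᵥ P *ᵥ z) • N *ᵥ u := by
  rw [← mulVec_mulVec, ← mulVec_mulVec, vecMulVec_mulVec, op_smul_eq_smul, mulVec_smul]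

theorem star_conjTranspose_mulVec_dotProduct_s18 [StarRing R] (M : Matrix m k R) (y : m → R)
    (v : k → R) : star (Mᴴ *ᵥ y) ⬝ᵥ v = star y ⬝ᵥ M *ᵥ v := by
  rw [star_mulVec, conjTranspose_conjTranspose, dotProduct_mulVec]

theorem star_dotProduct_mul_vecMulVec_mul_conjTranspose_mulVec [StarRing R] (M : Matrix m k R)
    (u v : k → R) (w : m → R) :
    star w ⬝ᵥ (M * vecMulVec u (star v) * Mᴴ) *ᵥ w
      = (star w ⬝ᵥ M *ᵥ u) * star (star w ⬝ᵥ M *ᵥ v) := by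
  rw [mul_vecMulVec_mul_mulVec, dotProduct_smul, smul_eq_mul, star_dotProduct,
    star_conjTranspose_mulVec_dotProduct_s18, mul_comm]

theorem inv_mulVec_eq_smul_inv_add_vecMulVec_mulVec [DecidableEq m] {G : Matrix m m R}
    (u v : m → R) (hG : IsUnit G) (hF : IsUnit (vecMulVec u v + G)) :
    G⁻¹ *ᵥ u = (1 + v ⬝ᵥ G⁻¹ *ᵥ u) • (vecMulVec u v + G)⁻¹ *ᵥ u := by
  have hFw : (vecMulVec u v + G) *ᵥ (G⁻¹ *ᵥ u) = (1 + v ⬝ᵥ G⁻¹ *ᵥ u) • u := by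
    rw [add_mulVec, vecMulVec_mulVec, op_smul_eq_smul, mulVec_mulVec,
      mul_nonsing_inv _ ((isUnit_iff_isUnit_det G).mp hG), one_mulVec, add_smul, one_smul,
      add_comm]
  calc G⁻¹ *ᵥ u = ((vecMulVec u v + G)⁻¹ * (vecMulVec u v + G)) *ᵥ (G⁻¹ *ᵥ u) := by
        rw [nonsing_inv_mul _ ((isUnit_iff_isUnit_det _).mp hF), one_mulVec]
    _ = _ := by rw [← mulVec_mulVec, hFw, mulVec_smul]

end MatrixAlgebra

section Ratio

variable {n d ℓ : ℕ} (A : Fin n → Matrix (Fin ℓ) (Fin d) ℂ)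
  (B : Fin n → Fin n → Matrix (Fin ℓ) (Fin d) ℂ) {x : Fin n → Fin d → ℂ} {i : Fin n}

theorem Mratio_nonneg (hG : (Gmat B x i).PosDef) : 0 ≤ Mratio A B x i :=
  (Complex.nonneg_iff.mp (hG.inv.posSemidef.dotProduct_mulVec_nonneg (A i *ᵥ x i))).1

theorem ofReal_Mratio (hG : (Gmat B x i).PosDef) :
    (Mratio A B x i : ℂ) = star (A i *ᵥ x i) ⬝ᵥ (Gmat B x i)⁻¹ *ᵥ (A i *ᵥ x i) :=
  (Complex.eq_re_of_ofReal_le (hG.inv.posSemidef.dotProduct_mulVec_nonneg _)).symm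

theorem star_inv_mulVec_dotProduct_eq_Mratio (hG : (Gmat B x i).PosDef) :
    star ((Gmat B x i)⁻¹ *ᵥ (A i *ᵥ x i)) ⬝ᵥ (A i *ᵥ x i) = Mratio A B x i := by
  rw [star_mulVec, hG.inv.isHermitian.eq, ← dotProduct_mulVec, ofReal_Mratio A B hG]

theorem inv_mulVec_eq_one_add_Mratio_smul (hG : (Gmat B x i).PosDef) :
    (Gmat B x i)⁻¹ *ᵥ (A i *ᵥ x i) = ((1 + Mratio A B x i : ℝ) : ℂ) •
      (vecMulVec (A i *ᵥ x i) (star (A i *ᵥ x i)) + Gmat B x i)⁻¹ *ᵥ (A i *ᵥ x i) := by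
  have hF := PosDef.posSemidef_add (posSemidef_vecMulVec_self_star (A i *ᵥ x i)) hG
  rw [inv_mulVec_eq_smul_inv_add_vecMulVec_mulVec _ _ hG.isUnit hF.isUnit,
    ← ofReal_Mratio A B hG, Complex.ofReal_add, Complex.ofReal_one]

theorem hasFDerivAt_Mratio (hG : (Gmat B x i).PosDef) :
    ∃ L : (Fin n → Fin d → ℂ) →L[ℝ] ℝ, HasFDerivAt (fun y => Mratio A B y i) L x ∧
      ∀ h, L h = 2 * (star ((Gmat B x i)⁻¹ *ᵥ (A i *ᵥ x i)) ⬝ᵥ A i *ᵥ h i).re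
        - 2 * ∑ j, (star (star ((Gmat B x i)⁻¹ *ᵥ (A i *ᵥ x i)) ⬝ᵥ B i j *ᵥ x j)
            * (star ((Gmat B x i)⁻¹ *ᵥ (A i *ᵥ x i)) ⬝ᵥ B i j *ᵥ h j)).re := by
  have ha : HasFDerivAt (fun y : Fin n → Fin d → ℂ => A i *ᵥ y i)
      (((mulVecLin (A i)).restrictScalars ℝ).toContinuousLinearMap ∘L .proj i) x :=
    ((mulVecLin (A i)).restrictScalars ℝ).toContinuousLinearMap.hasFDerivAt.comp x
      (hasFDerivAt_apply i x)
  obtain ⟨G', hG', hG'_apply⟩ := hasFDerivAt_Gmat B x i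
  obtain ⟨L, hL, hL_apply⟩ := ha.re_star_dotProduct_inv_mulVec hG' hG.isUnit hG.isHermitian
  refine ⟨L, hL, fun h => ?_⟩
  rw [hL_apply, hG'_apply]
  simp only [Matrix.mul_add, Matrix.add_mul, add_mulVec, sum_mulVec, dotProduct_add,
    dotProduct_sum, star_dotProduct_mul_vecMulVec_mul_conjTranspose_mulVec, Complex.add_re,
    Complex.re_sum, Finset.mul_sum]
  congr 1
  refine Finset.sum_congr rfl fun j _ => ?_
  simp only [Complex.mul_re, Complex.star_def, Complex.conj_re, Complex.conj_im]
  ring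

theorem hasFDerivAt_log_one_add_Mratio (hG : (Gmat B x i).PosDef) (y : Fin ℓ → ℂ)
    (hy : (Gmat B x i)⁻¹ *ᵥ (A i *ᵥ x i) = ((1 + Mratio A B x i : ℝ) : ℂ) • y) :
    ∃ L : (Fin n → Fin d → ℂ) →L[ℝ] ℝ,
      HasFDerivAt (fun z => Real.log (1 + Mratio A B z i)) L x ∧
      ∀ h, L h = 2 * (star y ⬝ᵥ A i *ᵥ h i).re - 2 * (1 + Mratio A B x i) *
        ∑ j, (star (star y ⬝ᵥ B i j *ᵥ x j) * (star y ⬝ᵥ B i j *ᵥ h j)).re := by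
  obtain ⟨L, hL, hL_apply⟩ := hasFDerivAt_Mratio A B hG
  have hpos : 0 < 1 + Mratio A B x i := by linarith [Mratio_nonneg A B hG]
  refine ⟨(1 + Mratio A B x i)⁻¹ • L, (hL.const_add 1).log hpos.ne', fun h => ?_⟩
  rw [_root_.smul_apply, hL_apply, hy, star_smul, Complex.star_def, Complex.conj_ofReal]
  simp only [smul_dotProduct, smul_eq_mul, map_mul, Complex.conj_ofReal, mul_mul_mul_comm,
    ← Complex.ofReal_mul, Complex.re_ofReal_mul, ← Finset.mul_sum]
  field_simp

theorem re_star_sub_mulVec_dotProduct (μ t : Fin n → ℝ) (y : Fin n → Fin ℓ → ℂ)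
    (hy : ((1 + t i : ℝ) : ℂ) * (star (y i) ⬝ᵥ A i *ᵥ x i) = t i)
    (D : Matrix (Fin d) (Fin d) ℂ)
    (hD : D = ((μ i * (1 + t i) : ℝ) : ℂ) • ((A i)ᴴ * vecMulVec (y i) (star (y i)) * A i)
      + ∑ j, ((μ j * (1 + t j) : ℝ) : ℂ) • ((B j i)ᴴ * vecMulVec (y j) (star (y j)) * B j i))
    (v : Fin d → ℂ) :
    (star (((μ i * (1 + t i) : ℝ) : ℂ) • ((A i)ᴴ *ᵥ y i) - D *ᵥ x i) ⬝ᵥ v).re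
      = μ i * (star (y i) ⬝ᵥ A i *ᵥ v).re - ∑ j, μ j * (1 + t j) *
          (star (star (y j) ⬝ᵥ B j i *ᵥ x i) * (star (y j) ⬝ᵥ B j i *ᵥ v)).re := by
  rw [hD, add_mulVec, sum_mulVec]
  simp only [smul_mulVec, mul_vecMulVec_mul_mulVec, star_sub, star_add, star_sum, star_smul,
    sub_dotProduct, add_dotProduct, sum_dotProduct, smul_dotProduct,
    star_conjTranspose_mulVec_dotProduct_s18, Complex.star_def, Complex.conj_ofReal, smul_eq_mul]
  have hτ : ((μ i * (1 + t i) : ℝ) : ℂ) * (starRingEnd ℂ) (star (y i) ⬝ᵥ A i *ᵥ x i)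
      = (μ i * t i : ℝ) := by
    have hy' := congrArg (starRingEnd ℂ) hy
    rw [map_mul, Complex.conj_ofReal, Complex.conj_ofReal] at hy'
    push_cast
    rw [mul_assoc, ← Complex.ofReal_one, ← Complex.ofReal_add, hy']
  simp only [← mul_assoc, hτ]
  simp only [mul_assoc, Complex.sub_re, Complex.add_re, Complex.re_sum, Complex.re_ofReal_mul]
  ring

end Ratio

theorem go_hasFDerivAt_general {n d ℓ : ℕ} (μ : Fin n → ℝ)
    (A : Fin n → Matrix (Fin ℓ) (Fin d) ℂ)
    (B : Fin n → Fin n → Matrix (Fin ℓ) (Fin d) ℂ)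
    (x : Fin n → Fin d → ℂ) (hG : ∀ i, (Gmat B x i).PosDef)
    (t : Fin n → ℝ) (ht : ∀ i, t i = Mratio A B x i)
    (Fm : Fin n → Matrix (Fin ℓ) (Fin ℓ) ℂ)
    (hFm : ∀ i, Fm i =
      vecMulVec (A i *ᵥ x i) (star (A i *ᵥ x i)) + Gmat B x i)
    (yhat : Fin n → Fin ℓ → ℂ)
    (hyhat : ∀ i, yhat i = (Fm i)⁻¹ *ᵥ (A i *ᵥ x i))
    (Dhat : Fin n → Matrix (Fin d) (Fin d) ℂ)
    (hDhat : ∀ i, Dhat i =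
      ((μ i * (1 + t i) : ℝ) : ℂ) •
          ((A i)ᴴ * vecMulVec (yhat i) (star (yhat i)) * A i)
        + ∑ j, ((μ j * (1 + t j) : ℝ) : ℂ) •
            ((B j i)ᴴ * vecMulVec (yhat j) (star (yhat j)) * B j i)) :
    ∃ L : (Fin n → Fin d → ℂ) →L[ℝ] ℝ,
      HasFDerivAt (go μ A B) L x ∧
      ∀ h : Fin n → Fin d → ℂ,
        L h = 2 * ∑ i,
          (star (((μ i * (1 + t i) : ℝ) : ℂ) • ((A i)ᴴ *ᵥ yhat i)
            - Dhat i *ᵥ x i) ⬝ᵥ h i).re := by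
  have hw : ∀ i, (Gmat B x i)⁻¹ *ᵥ (A i *ᵥ x i) = ((1 + Mratio A B x i : ℝ) : ℂ) • yhat i :=
    fun i => by rw [hyhat, hFm, inv_mulVec_eq_one_add_Mratio_smul A B (hG i)]
  have hτ : ∀ i, ((1 + t i : ℝ) : ℂ) * (star (yhat i) ⬝ᵥ A i *ᵥ x i) = t i := fun i => by
    rw [ht, ← star_inv_mulVec_dotProduct_eq_Mratio A B (hG i), hw i, star_smul, smul_dotProduct,
      Complex.star_def, Complex.conj_ofReal, smul_eq_mul]
  choose L hL hL_apply using fun i => hasFDerivAt_log_one_add_Mratio A B (hG i) (yhat i) (hw i)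
  refine ⟨∑ i, μ i • L i, HasFDerivAt.fun_sum fun i _ => (hL i).const_mul (μ i), fun h => ?_⟩
  simp only [_root_.sum_apply, _root_.smul_apply, hL_apply, ← ht, smul_eq_mul,
    re_star_sub_mulVec_dotProduct A B μ t yhat (hτ _) _ (hDhat _)]
  simp only [mul_sub, Finset.mul_sum, Finset.sum_sub_distrib]
  rw [Finset.sum_comm (f := fun i j => 2 * _)]
  congr 1
  · exact Finset.sum_congr rfl fun i _ => by ring
  · exact Finset.sum_congr rfl fun j _ => Finset.sum_congr rfl fun i _ => by ring

/-- **Corollary 1**: with `tᵢ = Mᵢ(x)`, `Fᵢ(x) = Aᵢ xᵢ xᵢᴴ Aᵢᴴ + Gᵢ(x)`,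
`ŷᵢ = Fᵢ(x)⁻¹ Aᵢ xᵢ`, and
`D̂ᵢ = μᵢ(1 + tᵢ) Aᵢᴴ ŷᵢ ŷᵢᴴ Aᵢ + ∑ⱼ μⱼ(1 + tⱼ) Bⱼᵢᴴ ŷⱼ ŷⱼᴴ Bⱼᵢ`,
the objective `g_o` is ℝ-differentiable at `x` with ℝ-Fréchet derivative in
direction `h` equal to `2 ∑ᵢ Re{(μᵢ(1 + tᵢ) Aᵢᴴ ŷᵢ − D̂ᵢ xᵢ)ᴴ hᵢ}`. -/
theorem go_hasFDerivAt {n d ℓ : ℕ} (μ : Fin n → ℝ) (hμ : ∀ i, 0 < μ i)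
    (A : Fin n → Matrix (Fin ℓ) (Fin d) ℂ)
    (B : Fin n → Fin n → Matrix (Fin ℓ) (Fin d) ℂ)
    (x : Fin n → Fin d → ℂ) (hG : ∀ i, (Gmat B x i).PosDef)
    (t : Fin n → ℝ) (ht : ∀ i, t i = Mratio A B x i)
    (Fm : Fin n → Matrix (Fin ℓ) (Fin ℓ) ℂ)
    (hFm : ∀ i, Fm i =
      vecMulVec (A i *ᵥ x i) (star (A i *ᵥ x i)) + Gmat B x i)
    (yhat : Fin n → Fin ℓ → ℂ)
    (hyhat : ∀ i, yhat i = (Fm i)⁻¹ *ᵥ (A i *ᵥ x i))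
    (Dhat : Fin n → Matrix (Fin d) (Fin d) ℂ)
    (hDhat : ∀ i, Dhat i =
      ((μ i * (1 + t i) : ℝ) : ℂ) •
          ((A i)ᴴ * vecMulVec (yhat i) (star (yhat i)) * A i)
        + ∑ j, ((μ j * (1 + t j) : ℝ) : ℂ) •
            ((B j i)ᴴ * vecMulVec (yhat j) (star (yhat j)) * B j i)) :
    ∃ L : (Fin n → Fin d → ℂ) →L[ℝ] ℝ,
      HasFDerivAt (go μ A B) L x ∧
      ∀ h : Fin n → Fin d → ℂ,
        L h = 2 * ∑ i,
          (star (((μ i * (1 + t i) : ℝ) : ℂ) • ((A i)ᴴ *ᵥ yhat i)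
            - Dhat i *ᵥ x i) ⬝ᵥ h i).re :=
  go_hasFDerivAt_general μ A B x hG t ht Fm hFm yhat hyhat Dhat hDhat
end
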